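/- Let b be a positive real number, let k₁, …, kₙ be pairwise distinct real numbers, and let Q₁, …, Qₙ be polynomials with complex coefficients, not all zero. Further let R₁, …, R_m be polynomials with complex coefficients and c₁, …, c_m complex numbers with real part Re(c_j) < b for each j. Then the function t ↦ e^{b t} · Σ_{r=1}^{n} Q_r(t) e^{i k_r t} + Σ_{j=1}^{m} R_j(t) e^{c_j t} is unbounded on (0, ∞). (This packages the final step of the paper's proof of Lemma 3: the bracketed sum over V/U, multiplied by the dominant real exponential e^{⟨H′,H₀⟩ t}, outweighs all the terms coming from s ∉ V.) -/

import Mathlib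

/-!
Multiplying by `e^{-bt}` kills the terms `R_j(t) e^{c_j t}` and, if the function were bounded,
also the whole function; so `S(t) = Σ_r Q_r(t) e^{i k_r t}` would tend to `0`. Dividing `S` by
`t^d`, `d` the largest degree of the `Q_r`, leaves the trigonometric sum `Σ_r a_r e^{i k_r t}`
of the coefficients of `t^d` up to an error tending to `0`. A trigonometric sum with distinct
frequencies can only tend to `0` if it is trivial: comparing it with its translate by a suitable
`h` removes one frequency without killing the others. Hence all top coefficients vanish, and
descending in `d` gives `Q_r = 0` for all `r`.
-/

open Filter Topology Polynomial Complex

lemma tendsto_eval_mul_exp_atTop_zero (P : ℂ[X]) {a : ℂ} (ha : a.re < 0) :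
    Tendsto (fun t : ℝ => P.eval (t : ℂ) * exp (a * t)) atTop (𝓝 0) := by
  induction P using Polynomial.induction_on' with
  | add p q hp hq => simpa [add_mul] using hp.add hq
  | monomial n c =>
    rw [tendsto_zero_iff_norm_tendsto_zero]
    have h := (tendsto_rpow_mul_exp_neg_mul_atTop_nhds_zero n (-a.re) (neg_pos.2 ha)).const_mul ‖c‖
    rw [mul_zero] at h
    refine h.congr' ?_
    filter_upwards [eventually_ge_atTop 0] with t ht
    simp [norm_exp, Real.rpow_natCast, abs_of_nonneg ht, mul_assoc]

theorem tendsto_zero_of_norm_exp_mul_add_sum_le {ι : Type*} [Fintype ι] {b : ℝ} (hb : 0 < b)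
    (S : ℝ → ℂ) (R : ι → ℂ[X]) (c : ι → ℂ) (hc : ∀ j, (c j).re < b) {B : ℝ}
    (hB : ∀ t : ℝ, 0 < t → ‖exp (b * t) * S t + ∑ j, (R j).eval (t : ℂ) * exp (c j * t)‖ ≤ B) :
    Tendsto S atTop (𝓝 0) := by
  set F : ℝ → ℂ := fun t => exp (b * t) * S t + ∑ j, (R j).eval (t : ℂ) * exp (c j * t)
  have hF : Tendsto (fun t : ℝ => F t * exp (-b * t)) atTop (𝓝 0) := by
    have hexp : Tendsto (fun t : ℝ => B * Real.exp (-b * t)) atTop (𝓝 0) := by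
      simpa using (Real.tendsto_exp_atBot.comp
        (tendsto_id.const_mul_atTop_of_neg (neg_neg_iff_pos.2 hb) :
          Tendsto (fun t : ℝ => -b * t) atTop atBot)).const_mul B
    refine squeeze_zero_norm' ?_ hexp
    filter_upwards [eventually_gt_atTop 0] with t ht
    rw [norm_mul, norm_exp]
    simpa using mul_le_mul_of_nonneg_right (hB t ht) (Real.exp_nonneg (-b * t))
  have hT : Tendsto (fun t : ℝ => ∑ j, (R j).eval (t : ℂ) * exp ((c j - b) * t))
      atTop (𝓝 0) := by
    simpa using tendsto_finsetSum Finset.univ fun j _ =>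
      tendsto_eval_mul_exp_atTop_zero (R j) (a := c j - b) (by simpa using hc j)
  refine (sub_zero (0 : ℂ) ▸ hF.sub hT).congr fun t => ?_
  simp only [F, add_mul, Finset.sum_mul, mul_assoc, ← exp_add]
  ring_nf
  rw [mul_right_comm, ← exp_add, add_neg_cancel, exp_zero, one_mul]

lemma norm_exp_I_mul_ofReal_mul (k t : ℝ) : ‖exp (I * (k * t))‖ = 1 := by
  exact_mod_cast norm_exp_I_mul_ofReal (k * t)

lemma exists_exp_I_mul_ne {k k' : ℝ} (hk : k ≠ k') :
    ∃ h : ℝ, exp (I * (k * h)) ≠ exp (I * (k' * h)) := by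
  set h := Real.pi / (k - k')
  have hsplit : (k : ℂ) * h = k' * h + Real.pi := by
    have : k * h = k' * h + Real.pi := by
      simp only [h]; field_simp [sub_ne_zero.2 hk]; ring
    exact_mod_cast this
  refine ⟨h, fun heq => exp_ne_zero (I * (k' * h)) ?_⟩
  rw [hsplit, mul_add, mul_comm I (Real.pi : ℂ), exp_add, exp_pi_mul_I] at heq
  linear_combination -heq / 2

theorem eq_zero_of_tendsto_sum_mul_exp_I {ι : Type*} {k : ι → ℝ} (s : Finset ι)
    (hk : Set.InjOn k s) (a : ι → ℂ)
    (h : Tendsto (fun t : ℝ => ∑ r ∈ s, a r * exp (I * (k r * t))) atTop (𝓝 0)) :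
    ∀ r ∈ s, a r = 0 := by
  classical
  induction s using Finset.induction_on generalizing a with
  | empty => simp
  | insert w s hw ih =>
    have hs : ∀ r ∈ s, a r = 0 := by
      intro r hr
      have hkr : k r ≠ k w := fun e => hw (hk (by simp) (by simp [hr]) e.symm ▸ hr)
      obtain ⟨x, hx⟩ := exists_exp_I_mul_ne hkr
      have hshift : ∀ (j : ι) (t : ℝ),
          exp (I * (k j * (t + x : ℝ))) = exp (I * (k j * x)) * exp (I * (k j * t)) := by
        intro j t
        rw [← exp_add]
        push_cast
        ring_nf
      -- `g(t + x) - e^{i k_w x} g(t)` has no `w`-term; its `r`-term survives by the choice of `x`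
      have hlim := (h.comp (tendsto_atTop_add_const_right _ x tendsto_id)).sub
        (h.const_mul (exp (I * (k w * x))))
      rw [mul_zero, sub_zero] at hlim
      refine (mul_eq_zero.1 (ih (hk.mono (by simp))
        (fun j => a j * (exp (I * (k j * x)) - exp (I * (k w * x)))) (hlim.congr fun t => ?_)
        r hr)).resolve_right (sub_ne_zero.2 hx)
      simp only [Function.comp_apply, id, hshift, Finset.sum_insert hw, mul_add, Finset.mul_sum]
      rw [add_sub_add_comm, ← Finset.sum_sub_distrib, mul_left_comm, sub_self, zero_add]
      exact Finset.sum_congr rfl fun j _ => by ring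
    have hw0 : Tendsto (fun t : ℝ => ‖a w‖) atTop (𝓝 0) := by
      refine (tendsto_zero_iff_norm_tendsto_zero.1 h).congr fun t => ?_
      rw [Finset.sum_insert hw, Finset.sum_eq_zero fun r hr => by rw [hs r hr, zero_mul],
        add_zero, norm_mul, norm_exp_I_mul_ofReal_mul, mul_one]
    intro r hr
    rcases Finset.mem_insert.1 hr with rfl | hr
    · exact norm_eq_zero.1 (tendsto_const_nhds_iff.1 hw0)
    · exact hs r hr

theorem tendsto_eval_div_pow_cobounded {𝕜 : Type*} [NormedField 𝕜] (p : 𝕜[X]) {d : ℕ}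
    (hp : p.natDegree ≤ d) :
    Tendsto (fun z => p.eval z / z ^ d) (Bornology.cobounded 𝕜) (𝓝 (p.coeff d)) := by
  -- `p(z) / z^d` is the reversed polynomial `reflect d p` evaluated at `z⁻¹`
  have h := ((reflect d p).continuous.tendsto 0).comp tendsto_inv₀_cobounded
  rw [Function.comp_def, ← coeff_zero_eq_eval_zero, coeff_reflect, revAt_zero] at h
  refine h.congr' ?_
  filter_upwards [Bornology.eventually_ne_cobounded 0] with z hz
  let _ := invertibleOfNonzero hz
  rw [eq_div_iff (pow_ne_zero d hz), ← invOf_eq_inv, eval, eval,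
    ← eval₂_reflect_mul_pow _ _ _ _ hp]

theorem coeff_eq_zero_of_tendsto_sum_eval_mul_exp_I {ι : Type*} [Fintype ι] {k : ι → ℝ}
    (hk : Function.Injective k) (Q : ι → ℂ[X])
    (h : Tendsto (fun t : ℝ => ∑ r, (Q r).eval (t : ℂ) * exp (I * (k r * t))) atTop (𝓝 0))
    {d : ℕ} (hd : ∀ r, (Q r).natDegree ≤ d) :
    ∀ r, (Q r).coeff d = 0 := by
  have hdiv : Tendsto (fun t : ℝ => ∑ r, (Q r).eval (t : ℂ) / (t : ℂ) ^ d * exp (I * (k r * t)))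
      atTop (𝓝 0) := by
    refine squeeze_zero_norm' ?_ (tendsto_zero_iff_norm_tendsto_zero.1 h)
    filter_upwards [eventually_ge_atTop 1] with t ht
    simp_rw [div_mul_eq_mul_div, ← Finset.sum_div, norm_div, norm_pow, norm_real,
      Real.norm_of_nonneg (zero_le_one.trans ht)]
    exact div_le_self (norm_nonneg _) (one_le_pow₀ ht)
  have herr : Tendsto (fun t : ℝ => ∑ r,
      ((Q r).eval (t : ℂ) / (t : ℂ) ^ d - (Q r).coeff d) * exp (I * (k r * t))) atTop (𝓝 0) := by
    refine tendsto_zero_iff_norm_tendsto_zero.2 (squeeze_zero (fun _ => norm_nonneg _)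
      (fun t => norm_sum_le _ _) ?_)
    simpa [norm_exp_I_mul_ofReal_mul] using tendsto_finsetSum Finset.univ fun r _ =>
      (((tendsto_eval_div_pow_cobounded (Q r) (hd r)).comp
        (RCLike.tendsto_ofReal_atTop_cobounded ℂ)).sub_const ((Q r).coeff d)).norm
  refine fun r => eq_zero_of_tendsto_sum_mul_exp_I Finset.univ hk.injOn (fun r => (Q r).coeff d)
    ((sub_zero (0 : ℂ) ▸ hdiv.sub herr).congr fun t => ?_) r (Finset.mem_univ r)
  rw [← Finset.sum_sub_distrib]
  exact Finset.sum_congr rfl fun r _ => by ring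

theorem eq_zero_of_tendsto_sum_eval_mul_exp_I {ι : Type*} [Fintype ι] {k : ι → ℝ}
    (hk : Function.Injective k) (Q : ι → ℂ[X])
    (h : Tendsto (fun t : ℝ => ∑ r, (Q r).eval (t : ℂ) * exp (I * (k r * t))) atTop (𝓝 0)) :
    ∀ r, Q r = 0 := by
  suffices ∀ d, (∀ r, (Q r).natDegree ≤ d) → ∀ r, Q r = 0 from
    this _ fun r => Finset.le_sup (f := fun r => (Q r).natDegree) (Finset.mem_univ r)
  intro d
  induction d with
  | zero =>
    intro hd r
    rw [eq_C_of_natDegree_le_zero (hd r), coeff_eq_zero_of_tendsto_sum_eval_mul_exp_I hk Q h hd r,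
      map_zero]
  | succ d ih =>
    refine fun hd => ih fun r => natDegree_le_iff_coeff_eq_zero.2 fun N hN => ?_
    rcases (Nat.succ_le_of_lt hN).eq_or_lt with rfl | hlt
    · exact coeff_eq_zero_of_tendsto_sum_eval_mul_exp_I hk Q h hd r
    · exact natDegree_le_iff_coeff_eq_zero.1 (hd r) N hlt

/-- The final step of the paper's proof of Lemma 3: if `b > 0`, `k₁, …, kₙ` are pairwise
distinct reals, `Q₁, …, Qₙ` are complex polynomials not all zero, and `R₁, …, R_m` are
complex polynomials with exponents `c_j` of real part `< b`, then
`t ↦ e^{bt} Σ_r Q_r(t) e^{i k_r t} + Σ_j R_j(t) e^{c_j t}` is unbounded on `(0, ∞)`. -/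
theorem dominant_exponential_unbounded
    (b : ℝ) (hb : 0 < b)
    {n m : ℕ} (k : Fin n → ℝ) (hk : Function.Injective k)
    (Q : Fin n → Polynomial ℂ) (hQ : ∃ r, Q r ≠ 0)
    (R : Fin m → Polynomial ℂ) (c : Fin m → ℂ) (hc : ∀ j, (c j).re < b) :
    ∀ C : ℝ, ∃ t : ℝ, 0 < t ∧ C <
      ‖Complex.exp ((b : ℂ) * t) * ∑ r, (Q r).eval (t : ℂ) * Complex.exp (Complex.I * (k r * t)) +
        ∑ j, (R j).eval (t : ℂ) * Complex.exp (c j * t)‖ := by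
  by_contra! hbounded
  obtain ⟨B, hB⟩ := hbounded
  obtain ⟨r, hr⟩ := hQ
  exact hr (eq_zero_of_tendsto_sum_eval_mul_exp_I hk Q
    (tendsto_zero_of_norm_exp_mul_add_sum_le hb _ R c hc hB) r)
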